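/- Let m ≥ 2, K ∈ ℝ^{m×m}, a > 0, η ∈ ℝ^m with η_i > −1 for all i, fix j ∈ {1,…,m−1} and α > max{0, 1−η_j, 1−η_m}. For x ∈ Δ_{−m}° write x_m := 1 − Σ_{i=1}^{m−1} x_i and define the profiled score for the case b = 0: s_j(x) = −(κ_{·,j}^⊤ x^a) x_j^{a−1} + (κ_{·,m}^⊤ x^a) x_m^{a−1} + η_j / x_j − η_m / x_m. Then ∫_{Δ_{−m}°} (Π_{k=1}^m x_k^{η_k}) · min{x_j, x_m}^α · s_j(x)² dx < ∞. -/

import Mathlib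

open MeasureTheory Matrix Finset

/-- The open simplex `Δ_{-m}°` in `ℝ^n` (where `m = n+1`). -/
def simplexInt (n : ℕ) : Set (Fin n → ℝ) :=
  {x | (∀ i, 0 < x i) ∧ ∑ i, x i < 1}

/-- Profile the last coordinate: send `x ∈ ℝ^n` to `(x, 1 - ∑ x) ∈ ℝ^{n+1}`. -/
noncomputable def fullVec {n : ℕ} (x : Fin n → ℝ) : Fin (n + 1) → ℝ :=
  Fin.snoc x (1 - ∑ i, x i)

/-!
On the simplex every coordinate lies in `(0, 1]`, so each term of the score is bounded by a
constant over `x_j` or over `x_m`, and the weight `min(x_j, x_m)^α` turns the squared score into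
at most a multiple of `x_j^(α-2) + x_m^(α-2)`. Multiplied by the density bound these are again
Dirichlet kernels `∏ x_k^(η'_k)` with `η' > -1`, because `α > 1 - η_j` and `α > 1 - η_m`.
Dirichlet kernels are integrable on the simplex: where `x_m ≥ ε` the kernel is bounded by a
product of integrable one-variable powers, and the affine involution exchanging `x_j` with
`x_m = 1 - ∑ x`, which preserves Lebesgue measure, reduces the region `x_j ≥ ε` to that case.
For `ε = 1/(n+1)` these regions cover the simplex.
-/

open Set

lemma integrableOn_prod_rpow_pi_Ioo {ι : Type*} [Fintype ι] {p : ι → ℝ} (hp : ∀ i, -1 < p i) :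
    IntegrableOn (fun x : ι → ℝ => ∏ i, x i ^ p i) (univ.pi fun _ => Ioo 0 1) := by
  rw [IntegrableOn, volume_pi, Measure.restrict_pi_pi]
  exact Integrable.fintype_prod (f := fun i t => t ^ p i) fun i =>
    (intervalIntegral.integrableOn_Ioo_rpow_iff one_pos).2 (hp i)

lemma rpow_le_max_of_mem_Icc {ε t : ℝ} (hε : 0 < ε) (ht : t ∈ Icc ε 1) (p : ℝ) :
    t ^ p ≤ max (ε ^ p) 1 := by
  rcases le_total 0 p with hp | hp
  · exact (Real.rpow_le_one (hε.le.trans ht.1) ht.2 hp).trans (le_max_right _ _)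
  · exact (Real.rpow_le_rpow_of_nonpos hε ht.1 hp).trans (le_max_left _ _)

lemma min_rpow_mul_sq_sub_le {u v α C D s t : ℝ} (hu : 0 < u) (hv : 0 < v) (hα : 0 ≤ α)
    (hs : |s| ≤ C / u) (ht : |t| ≤ D / v) :
    min u v ^ α * (s - t) ^ 2 ≤ 2 * (C ^ 2 * u ^ (α - 2) + D ^ 2 * v ^ (α - 2)) := by
  have hterm : ∀ {w r E : ℝ}, 0 < w → min u v ≤ w → |r| ≤ E / w →
      min u v ^ α * r ^ 2 ≤ E ^ 2 * w ^ (α - 2) := by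
    intro w r E hw hmin hr
    have hr2 : r ^ 2 ≤ (E / w) ^ 2 := sq_le_sq' (abs_le.1 hr).1 (abs_le.1 hr).2
    calc min u v ^ α * r ^ 2 ≤ w ^ α * (E / w) ^ 2 := by
          gcongr
      _ = E ^ 2 * w ^ (α - 2) := by
          rw [Real.rpow_sub hw, Real.rpow_two]; field_simp
  have hst : (s - t) ^ 2 ≤ 2 * (s ^ 2 + t ^ 2) := by nlinarith [sq_nonneg (s + t)]
  calc min u v ^ α * (s - t) ^ 2 ≤ min u v ^ α * (2 * (s ^ 2 + t ^ 2)) := by gcongr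
    _ = 2 * (min u v ^ α * s ^ 2 + min u v ^ α * t ^ 2) := by ring
    _ ≤ 2 * (C ^ 2 * u ^ (α - 2) + D ^ 2 * v ^ (α - 2)) := by
        linarith [hterm hu (min_le_left u v) hs, hterm hv (min_le_right u v) ht]

lemma prod_rpow_add_single {ι : Type*} [Fintype ι] [DecidableEq ι] {p : ι → ℝ}
    (hp : ∀ i, 0 < p i) (η : ι → ℝ) (k : ι) (b : ℝ) :
    ∏ i, p i ^ (η + Pi.single k b : ι → ℝ) i = (∏ i, p i ^ η i) * p k ^ b := by
  simp_rw [Pi.add_apply, Real.rpow_add (hp _), prod_mul_distrib, Pi.single_apply]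
  simp

lemma neg_one_lt_add_single {ι : Type*} [DecidableEq ι] {η : ι → ℝ} (hη : ∀ i, -1 < η i)
    {k : ι} {b : ℝ} (hk : -1 < η k + b) (i : ι) : -1 < (η + Pi.single k b : ι → ℝ) i := by
  rcases eq_or_ne i k with rfl | hik
  · simpa using hk
  · simpa [hik] using hη i

section Simplex

variable {n : ℕ}

@[simp]
lemma fullVec_castSucc (x : Fin n → ℝ) (i : Fin n) : fullVec x i.castSucc = x i := by
  simp [fullVec]

@[simp]
lemma fullVec_last (x : Fin n → ℝ) : fullVec x (Fin.last n) = 1 - ∑ i, x i := by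
  simp [fullVec]

@[fun_prop]
lemma measurable_fullVec : Measurable (fullVec : (Fin n → ℝ) → Fin (n + 1) → ℝ) := by
  refine measurable_pi_iff.2 fun k => ?_
  induction k using Fin.lastCases with
  | last => simp only [fullVec_last]; fun_prop
  | cast i => simp only [fullVec_castSucc]; fun_prop

lemma sum_fullVec (x : Fin n → ℝ) : ∑ k, fullVec x k = 1 := by
  simp [Fin.sum_univ_castSucc]

lemma mem_simplexInt_iff {x : Fin n → ℝ} : x ∈ simplexInt n ↔ ∀ k, 0 < fullVec x k := by
  simp [simplexInt, Fin.forall_fin_succ']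

lemma fullVec_le_one {x : Fin n → ℝ} (hx : x ∈ simplexInt n) (k : Fin (n + 1)) :
    fullVec x k ≤ 1 := by
  rw [← sum_fullVec x]
  exact single_le_sum (fun k _ => ((mem_simplexInt_iff.1 hx) k).le) (mem_univ k)

lemma measurableSet_simplexInt : MeasurableSet (simplexInt n) := by
  simp only [simplexInt, ofPred_and, ofPred_forall]
  exact (MeasurableSet.iInter fun i => measurableSet_lt (by fun_prop) (by fun_prop)).inter
    (measurableSet_lt (by fun_prop) (by fun_prop))

lemma simplexInt_subset_pi_Ioo : simplexInt n ⊆ univ.pi fun _ => Ioo 0 1 := by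
  intro x ⟨hpos, hsum⟩ i _
  exact ⟨hpos i, (single_le_sum (fun i _ => (hpos i).le) (mem_univ i)).trans_lt hsum⟩

end Simplex

section Reflect

variable {n : ℕ}

noncomputable def reflect (j : Fin n) (x : Fin n → ℝ) : Fin n → ℝ :=
  Function.update x j (1 - ∑ i, x i)

lemma fullVec_reflect (j : Fin n) (x : Fin n → ℝ) :
    fullVec (reflect j x) = fullVec x ∘ Equiv.swap j.castSucc (Fin.last n) := by
  have hsum : ∑ i, reflect j x i = 1 - x j := by
    rw [reflect, sum_update_of_mem (mem_univ j), sum_sdiff_eq_sub (subset_univ {j}),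
      sum_singleton]
    ring
  funext k
  induction k using Fin.lastCases with
  | last => simp [hsum]
  | cast i =>
    rcases eq_or_ne i j with rfl | hij
    · simp [reflect]
    · rw [Function.comp_apply, Equiv.swap_apply_of_ne_of_ne (by simpa using hij)
        (Fin.castSucc_ne_last i)]
      simp [reflect, hij]

lemma reflect_involutive (j : Fin n) : Function.Involutive (reflect j) := by
  intro x
  funext i
  simpa only [fullVec_reflect, Function.comp_apply, Equiv.swap_apply_self,
    fullVec_castSucc] using congrFun (fullVec_reflect j (reflect j x)) i.castSucc

lemma measurable_reflect (j : Fin n) : Measurable (reflect j) := by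
  unfold reflect
  fun_prop

lemma reflect_eq_mulVec_add (j : Fin n) (x : Fin n → ℝ) :
    reflect j x =
      (1 : Matrix (Fin n) (Fin n) ℝ).updateRow j (fun _ => -1) *ᵥ x + Pi.single j 1 := by
  rw [updateRow_mulVec, one_mulVec]
  ext i
  rcases eq_or_ne i j with rfl | hij
  · simp only [reflect, Function.update_self, dotProduct, neg_mul, one_mul, sum_neg_distrib,
      Pi.add_apply, Pi.single_eq_same]
    ring
  · simp [reflect, hij]

lemma det_one_updateRow_neg_one (j : Fin n) :
    ((1 : Matrix (Fin n) (Fin n) ℝ).updateRow j (fun _ => -1)).det = -1 := by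
  convert det_updateRow_sum (1 : Matrix (Fin n) (Fin n) ℝ) j (fun _ => -1) using 3
  · ext i; simp [Matrix.one_apply]
  · simp

lemma measurePreserving_reflect (j : Fin n) : MeasurePreserving (reflect j) := by
  set M := (1 : Matrix (Fin n) (Fin n) ℝ).updateRow j (fun _ => -1)
  have hM : MeasurePreserving (toLin' M) :=
    ⟨(toLin' M).continuous_of_finiteDimensional.measurable, by
      rw [Real.map_matrix_volume_pi_eq_smul_volume_pi (by simp [M, det_one_updateRow_neg_one])]
      simp [M, det_one_updateRow_neg_one]⟩
  have h := (measurePreserving_add_right volume (Pi.single j (1 : ℝ))).comp hM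
  rwa [show reflect j = _ from funext (reflect_eq_mulVec_add j)]

end Reflect

section Dirichlet

variable {n : ℕ} {η : Fin (n + 1) → ℝ}

lemma integrableOn_prod_fullVec_rpow_of_le_last (hη : ∀ k, -1 < η k) {ε : ℝ} (hε : 0 < ε) :
    IntegrableOn (fun x : Fin n → ℝ => ∏ k, fullVec x k ^ η k)
      (simplexInt n ∩ {x | ε ≤ fullVec x (Fin.last n)}) := by
  have hS : MeasurableSet (simplexInt n ∩ {x | ε ≤ fullVec x (Fin.last n)}) :=
    measurableSet_simplexInt.inter (measurableSet_le (by fun_prop) (by fun_prop))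
  have hbox : IntegrableOn (fun x : Fin n → ℝ => ∏ i, x i ^ η i.castSucc)
      (simplexInt n ∩ {x | ε ≤ fullVec x (Fin.last n)}) :=
    (integrableOn_prod_rpow_pi_Ioo fun i : Fin n => hη i.castSucc).mono_set
      (inter_subset_left.trans simplexInt_subset_pi_Ioo)
  have hmeas : Measurable fun x : Fin n → ℝ => fullVec x (Fin.last n) ^ η (Fin.last n) := by
    fun_prop
  have hbdd : ∀ᵐ x ∂(volume.restrict (simplexInt n ∩ {x | ε ≤ fullVec x (Fin.last n)})),
      ‖fullVec x (Fin.last n) ^ η (Fin.last n)‖ ≤ max (ε ^ η (Fin.last n)) 1 := by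
    rw [ae_restrict_iff' hS]
    refine ae_of_all _ fun x ⟨hx, hxε⟩ => ?_
    have hpos := (mem_simplexInt_iff.1 hx) (Fin.last n)
    rw [Real.norm_of_nonneg (by positivity)]
    exact rpow_le_max_of_mem_Icc hε ⟨hxε, fullVec_le_one hx _⟩ _
  simp_rw [Fin.prod_univ_castSucc, fullVec_castSucc]
  exact hbox.mul_bdd hmeas.aestronglyMeasurable hbdd

lemma integrableOn_prod_fullVec_rpow_of_le_castSucc (hη : ∀ k, -1 < η k) {ε : ℝ} (hε : 0 < ε)
    (j : Fin n) :
    IntegrableOn (fun x : Fin n → ℝ => ∏ k, fullVec x k ^ η k)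
      (simplexInt n ∩ {x | ε ≤ fullVec x j.castSucc}) := by
  set σ := Equiv.swap j.castSucc (Fin.last n)
  have hpre : reflect j ⁻¹' (simplexInt n ∩ {x | ε ≤ fullVec x j.castSucc})
      = simplexInt n ∩ {x | ε ≤ fullVec x (Fin.last n)} := by
    ext x
    simp only [Set.mem_preimage, mem_inter_iff, mem_ofPred_eq, mem_simplexInt_iff,
      fullVec_reflect, Function.comp_apply, Equiv.swap_apply_left]
    rw [(Equiv.swap _ _).forall_congr_right (q := fun k => 0 < fullVec x k)]
  have hemb := (MeasurableEquiv.ofInvolutive _ (reflect_involutive j)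
    (measurable_reflect j)).measurableEmbedding
  rw [← (measurePreserving_reflect j).integrableOn_comp_preimage hemb, hpre]
  have hcomp : (fun x : Fin n → ℝ => ∏ k, fullVec x k ^ η k) ∘ reflect j
      = fun x => ∏ k, fullVec x k ^ (η ∘ σ) k := by
    funext x
    simp only [Function.comp_apply, fullVec_reflect]
    rw [← Equiv.prod_comp σ]
    simp [σ]
  rw [hcomp]
  exact integrableOn_prod_fullVec_rpow_of_le_last (fun k => hη _) hε

theorem integrableOn_prod_fullVec_rpow (hη : ∀ k, -1 < η k) :
    IntegrableOn (fun x : Fin n → ℝ => ∏ k, fullVec x k ^ η k) (simplexInt n) := by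
  have hε : (0 : ℝ) < 1 / (n + 1) := by positivity
  have hcover : simplexInt n ⊆ ⋃ k, simplexInt n ∩ {x | 1 / (n + 1) ≤ fullVec x k} := by
    intro x hx
    obtain ⟨k, -, hk⟩ := exists_le_of_sum_le (s := univ) univ_nonempty
      (f := fun _ => (1 : ℝ) / (n + 1)) (g := fullVec x) (by rw [sum_fullVec]; simp [field])
    exact mem_iUnion.2 ⟨k, hx, hk⟩
  refine (integrableOn_finite_iUnion.2 fun k => ?_).mono_set hcover
  induction k using Fin.lastCases with
  | last => exact integrableOn_prod_fullVec_rpow_of_le_last hη hε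
  | cast j => exact integrableOn_prod_fullVec_rpow_of_le_castSucc hη hε j

end Dirichlet

/-- The profiled score `s_j(x)` is
`partialScore K a η (fullVec x) j - partialScore K a η (fullVec x) m`. -/
noncomputable def partialScore {ι : Type*} [Fintype ι] (K : Matrix ι ι ℝ) (a : ℝ) (η p : ι → ℝ)
    (k : ι) : ℝ :=
  -(∑ i, K i k * p i ^ a) * p k ^ (a - 1) + η k / p k

lemma abs_partialScore_le {ι : Type*} [Fintype ι] (K : Matrix ι ι ℝ) {a : ℝ} (ha : 0 ≤ a)
    (η : ι → ℝ) {p : ι → ℝ} (hp : ∀ i, p i ∈ Set.Ioc 0 1) (k : ι) :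
    |partialScore K a η p k| ≤ (∑ i, |K i k| + |η k|) / p k := by
  have hpk := (hp k).1
  have hsum : |∑ i, K i k * p i ^ a| ≤ ∑ i, |K i k| := by
    refine (abs_sum_le_sum_abs _ _).trans (sum_le_sum fun i _ => ?_)
    rw [abs_mul, abs_of_nonneg (Real.rpow_nonneg (hp i).1.le a)]
    exact mul_le_of_le_one_right (abs_nonneg _) (Real.rpow_le_one (hp i).1.le (hp i).2 ha)
  have hpow : p k ^ (a - 1) ≤ (p k)⁻¹ := by
    rw [← Real.rpow_neg_one]
    exact Real.rpow_le_rpow_of_exponent_ge hpk (hp k).2 (by linarith)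
  calc |partialScore K a η p k|
      ≤ |∑ i, K i k * p i ^ a| * p k ^ (a - 1) + |η k| / p k := by
        rw [partialScore]
        refine (abs_add_le _ _).trans_eq ?_
        rw [abs_mul, abs_neg, abs_of_nonneg (Real.rpow_nonneg hpk.le _), abs_div,
          abs_of_pos hpk]
    _ ≤ (∑ i, |K i k|) * (p k)⁻¹ + |η k| / p k := by gcongr
    _ = (∑ i, |K i k| + |η k|) / p k := by ring

theorem weighted_score_square_integrable_b_zero_general (n : ℕ)
    (K : Matrix (Fin (n + 1)) (Fin (n + 1)) ℝ) (a : ℝ) (ha : 0 < a)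
    (η : Fin (n + 1) → ℝ) (hη : ∀ i, -1 < η i)
    (j : Fin n) (α : ℝ)
    (hα : max 0 (max (1 - η j.castSucc) (1 - η (Fin.last n))) < α) :
    IntegrableOn (fun x : Fin n → ℝ =>
      (∏ k, fullVec x k ^ η k) *
      min (fullVec x j.castSucc) (fullVec x (Fin.last n)) ^ α *
      (-(∑ i, K i j.castSucc * fullVec x i ^ a) * fullVec x j.castSucc ^ (a - 1)
        + (∑ i, K i (Fin.last n) * fullVec x i ^ a) * fullVec x (Fin.last n) ^ (a - 1)
        + η j.castSucc / fullVec x j.castSucc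
        - η (Fin.last n) / fullVec x (Fin.last n)) ^ 2) (simplexInt n) := by
  simp only [max_lt_iff] at hα
  obtain ⟨hα0, hαj, hαm⟩ := hα
  set C : Fin (n + 1) → ℝ := fun k => ∑ i, |K i k| + |η k|
  have hdom := ((integrableOn_prod_fullVec_rpow
      (neg_one_lt_add_single hη (k := j.castSucc) (b := α - 2) (by linarith))).const_mul
        (2 * C j.castSucc ^ 2)).add
    ((integrableOn_prod_fullVec_rpow
      (neg_one_lt_add_single hη (k := Fin.last n) (b := α - 2) (by linarith))).const_mul
        (2 * C (Fin.last n) ^ 2))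
  refine hdom.mono' (by fun_prop) ((ae_restrict_iff' measurableSet_simplexInt).2 <|
    ae_of_all _ fun x hx => ?_)
  have hpos := mem_simplexInt_iff.1 hx
  have hp : ∀ k, fullVec x k ∈ Set.Ioc 0 1 := fun k => ⟨hpos k, fullVec_le_one hx k⟩
  have hscore := min_rpow_mul_sq_sub_le (hpos j.castSucc) (hpos (Fin.last n)) hα0.le
    (abs_partialScore_le K ha.le η hp j.castSucc) (abs_partialScore_le K ha.le η hp (Fin.last n))
  have hP : 0 ≤ ∏ k, fullVec x k ^ η k :=
    prod_nonneg fun k _ => (Real.rpow_pos_of_pos (hpos k) _).le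
  have hmin := Real.rpow_nonneg (lt_min (hpos j.castSucc) (hpos (Fin.last n))).le α
  rw [Real.norm_of_nonneg (mul_nonneg (mul_nonneg hP hmin) (sq_nonneg _)), Pi.add_apply,
    prod_rpow_add_single hpos, prod_rpow_add_single hpos]
  calc _ = (∏ k, fullVec x k ^ η k) * (min (fullVec x j.castSucc) (fullVec x (Fin.last n)) ^ α *
        (partialScore K a η (fullVec x) j.castSucc
          - partialScore K a η (fullVec x) (Fin.last n)) ^ 2) := by
        simp only [partialScore]; ring
    _ ≤ _ := mul_le_mul_of_nonneg_left hscore hP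
    _ = _ := by ring

/-- Weighted integrability of the squared profiled score against the density bound
`∏_k x_k^{η_k}` in the `a`-`0` (gamma-type) model, for `a > 0`, `η ≻ -1` and
`α > max{0, 1-η_j, 1-η_m}`. -/
theorem weighted_score_square_integrable_b_zero (n : ℕ) (hn : 1 ≤ n)
    (K : Matrix (Fin (n + 1)) (Fin (n + 1)) ℝ) (a : ℝ) (ha : 0 < a)
    (η : Fin (n + 1) → ℝ) (hη : ∀ i, -1 < η i)
    (j : Fin n) (α : ℝ)
    (hα : max 0 (max (1 - η j.castSucc) (1 - η (Fin.last n))) < α) :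
    IntegrableOn (fun x : Fin n → ℝ =>
      (∏ k, fullVec x k ^ η k) *
      min (fullVec x j.castSucc) (fullVec x (Fin.last n)) ^ α *
      (-(∑ i, K i j.castSucc * fullVec x i ^ a) * fullVec x j.castSucc ^ (a - 1)
        + (∑ i, K i (Fin.last n) * fullVec x i ^ a) * fullVec x (Fin.last n) ^ (a - 1)
        + η j.castSucc / fullVec x j.castSucc
        - η (Fin.last n) / fullVec x (Fin.last n)) ^ 2) (simplexInt n) :=
  weighted_score_square_integrable_b_zero_general n K a ha η hη j α hα
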